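/- For natural numbers p ≥ q ≥ 1, the set W_{p,q} of p×q complex matrices of full rank q is path-connected. -/

import Mathlib

/-!
Two full-rank matrices `A` and `B` are joined by the complex line `t ↦ A + t • (B - A)`.
Along it `det (Aᴴ * (A + t • (B - A)))` is a polynomial in `t` which equals
`det (Aᴴ * A) ≠ 0` at `t = 0`, so the line leaves the full-rank matrices at finitely many `t`
only. The complement of a finite set in `ℂ ≅ ℝ²` is path-connected, and a path in it from `0`
to `1` is carried by the line to a path from `A` to `B` through full-rank matrices.
-/

open Matrix Polynomial

theorem isPathConnected_of_countable_setOf_lineMap_notMem {E : Type*} [AddCommGroup E]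
    [Module ℂ E] [TopologicalSpace E] [IsTopologicalAddGroup E] [ContinuousSMul ℂ E]
    {U : Set E} (hU : U.Nonempty)
    (h : ∀ x ∈ U, ∀ y ∈ U, {t : ℂ | AffineMap.lineMap x y t ∉ U}.Countable) :
    IsPathConnected U := by
  refine isPathConnected_iff.2 ⟨hU, fun x hx y hy => ?_⟩
  have hline : IsPathConnected {t : ℂ | AffineMap.lineMap x y t ∈ U} := by
    simpa [Set.compl_ofPred] using (h x hx y hy).isPathConnected_compl_of_one_lt_rank
      (by simp [Complex.rank_real_complex])
  have hjoin := (hline.joinedIn 0 (by simpa) 1 (by simpa)).map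
    (AffineMap.lineMap_continuous (R := ℂ) (p := x) (q := y))
  simpa using hjoin.mono (by rintro _ ⟨t, ht, rfl⟩; exact ht)

theorem Matrix.finite_setOf_det_add_smul_eq_zero {n K : Type*} [Fintype n] [DecidableEq n]
    [CommRing K] [IsDomain K] {M : Matrix n n K} (hM : M.det ≠ 0) (N : Matrix n n K) :
    {t : K | (M + t • N).det = 0}.Finite := by
  set P : K[X] := (M.map C + (X : K[X]) • N.map C).det
  have hP : ∀ t, P.eval t = (M + t • N).det := fun t => by
    rw [← coe_evalRingHom, RingHom.map_det]
    congr 1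
    ext i j
    simpa using mul_comm _ _
  have hP0 : P ≠ 0 := fun h => hM (by simpa [h] using (hP 0).symm)
  simpa [IsRoot, hP] using Polynomial.finite_setOfPred_isRoot hP0

theorem Matrix.rank_eq_card_of_det_mul_ne_zero {m n K : Type*} [Fintype m] [Fintype n]
    [DecidableEq n] [CommRing K] [IsDomain K] {L : Matrix n m K} {A : Matrix m n K}
    (h : (L * A).det ≠ 0) : A.rank = Fintype.card n :=
  le_antisymm A.rank_le_card_width <| (rank_of_det_ne_zero h).symm.trans_le (rank_mul_le_right L A)

theorem Matrix.det_ne_zero_of_rank_eq_card {n K : Type*} [Fintype n] [DecidableEq n] [Field K]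
    {A : Matrix n n K} (h : A.rank = Fintype.card n) : A.det ≠ 0 := by
  have hrange : LinearMap.range A.mulVecLin = ⊤ :=
    Submodule.eq_top_of_finrank_eq (by rw [← rank, h, Module.finrank_fintype_fun_eq_card])
  rw [← isUnit_iff_ne_zero, ← isUnit_iff_isUnit_det, ← mulVec_surjective_iff_isUnit]
  exact LinearMap.range_eq_top.1 hrange

theorem Matrix.det_conjTranspose_mul_self_ne_zero {m n K : Type*} [Fintype m] [Fintype n]
    [DecidableEq n] [Field K] [PartialOrder K] [StarRing K] [StarOrderedRing K]
    {A : Matrix m n K} (h : A.rank = Fintype.card n) : (Aᴴ * A).det ≠ 0 :=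
  det_ne_zero_of_rank_eq_card (by rw [rank_conjTranspose_mul_self, h])

open scoped ComplexOrder in
theorem Matrix.finite_setOf_rank_lineMap_ne_card {m n : Type*} [Fintype m] [Fintype n]
    [DecidableEq n] {A : Matrix m n ℂ} (hA : A.rank = Fintype.card n) (B : Matrix m n ℂ) :
    {t : ℂ | (AffineMap.lineMap A B t).rank ≠ Fintype.card n}.Finite := by
  refine (finite_setOf_det_add_smul_eq_zero (det_conjTranspose_mul_self_ne_zero hA)
    (Aᴴ * (B - A))).subset fun t ht => by_contra fun hdet => ht ?_
  refine rank_eq_card_of_det_mul_ne_zero (L := Aᴴ) ?_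
  rwa [AffineMap.lineMap_apply_module', Matrix.mul_add, Matrix.mul_smul, add_comm]

theorem Matrix.rank_submatrix_one_castLE {K : Type*} [CommRing K] [IsDomain K] {p q : ℕ}
    (h : q ≤ p) : ((1 : Matrix (Fin p) (Fin p) K).submatrix id (Fin.castLE h)).rank = q := by
  have hinv : (1 : Matrix (Fin p) (Fin p) K).submatrix (Fin.castLE h) id *
      (1 : Matrix (Fin p) (Fin p) K).submatrix id (Fin.castLE h) = 1 := by
    rw [← submatrix_mul _ _ _ _ _ Function.bijective_id, mul_one]
    exact submatrix_one_embedding (Fin.castLEEmb h)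
  simpa using rank_eq_card_of_det_mul_ne_zero (n := Fin q)
    (by rw [hinv, det_one]; exact one_ne_zero)

theorem isPathConnected_full_rank_matrices_general (p q : ℕ) (hpq : q ≤ p) :
    IsPathConnected {A : Matrix (Fin p) (Fin q) ℂ | A.rank = q} := by
  refine isPathConnected_of_countable_setOf_lineMap_notMem
    ⟨_, rank_submatrix_one_castLE hpq⟩ fun A hA B _ => ?_
  simpa using (finite_setOf_rank_lineMap_ne_card (n := Fin q) (by simpa using hA) B).countable

/-- For `p ≥ q ≥ 1`, the set `W_{p,q}` of `p×q` complex matrices of full rank `q`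
is path-connected. -/
theorem isPathConnected_full_rank_matrices (p q : ℕ) (hq : 1 ≤ q) (hpq : q ≤ p) :
    IsPathConnected {A : Matrix (Fin p) (Fin q) ℂ | A.rank = q} :=
  isPathConnected_full_rank_matrices_general p q hpq
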